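/- arXiv:2302.03635 — 6 statements merged into one kernel-verified Lean document; each statement's English description precedes it below -/
import Mathlib

section
/- Let i ∈ {1,…,n} and 0 < r_0 < d. Then for every x with 0 < |x − a_i| < r_0: W(x) ≤ (n − 1)·d²/((d − r_0)²·|x − a_i|²) + c_1, where c_1 := Σ_{k,j ∈ {1,…,n}\{i}, j > k} |a_k − a_j|²/((|a_i − a_k| − r_0)²(|a_i − a_j| − r_0)²). -/
/-- Upper bound for `W(x) = (1/2) Σ_{i≠j} |aᵢ−aⱼ|²/(|x−aᵢ|²|x−aⱼ|²)` in the punctured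
ball `B(aᵢ, r₀) \ {aᵢ}`:
`W(x) ≤ (n−1) d²/((d−r₀)² |x−aᵢ|²) + c₁`, where
`c₁ = Σ_{k,j ≠ i, j > k} |a_k−a_j|²/((|aᵢ−a_k|−r₀)²(|aᵢ−a_j|−r₀)²)` and
`2d` is the minimal distance between distinct poles. -/
theorem stmt6
    {N n : ℕ} (hN : 3 ≤ N) (hn : 2 ≤ n)
    (a : Fin n → EuclideanSpace ℝ (Fin N)) (ha : Function.Injective a)
    (d : ℝ) (hd : IsLeast {r : ℝ | ∃ i j : Fin n, i ≠ j ∧ r = ‖a i - a j‖} (2 * d))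
    (i : Fin n) (r₀ : ℝ) (hr₀ : 0 < r₀) (hr₀d : r₀ < d)
    (x : EuclideanSpace ℝ (Fin N)) (hx : 0 < ‖x - a i‖) (hxr : ‖x - a i‖ < r₀) :
    1 / 2 * (∑ k, ∑ j, if k = j then 0 else
        ‖a k - a j‖ ^ 2 / (‖x - a k‖ ^ 2 * ‖x - a j‖ ^ 2))
      ≤ ((n : ℝ) - 1) * d ^ 2 / ((d - r₀) ^ 2 * ‖x - a i‖ ^ 2)
        + ∑ k, ∑ j, if k ≠ i ∧ j ≠ i ∧ k < j then
            ‖a k - a j‖ ^ 2 / ((‖a i - a k‖ - r₀) ^ 2 * (‖a i - a j‖ - r₀) ^ 2)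
          else 0 := by
  have hd0 : 0 < d := hr₀.trans hr₀d
  have hdr : 0 < d - r₀ := sub_pos.2 hr₀d
  set ρ : ℝ := ‖x - a i‖ with hρdef
  set A : ℝ := d ^ 2 / ((d - r₀) ^ 2 * ρ ^ 2) with hAdef
  set h : Fin n → Fin n → ℝ := fun k j =>
    ‖a k - a j‖ ^ 2 / ((‖a i - a k‖ - r₀) ^ 2 * (‖a i - a j‖ - r₀) ^ 2) with hhdef
  -- basic facts
  have hlow : ∀ j : Fin n, j ≠ i → 2 * d ≤ ‖a i - a j‖ := by
    intro j hj
    exact hd.2 ⟨i, j, Ne.symm hj, rfl⟩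
  have hsub : ∀ j : Fin n, j ≠ i → r₀ < ‖a i - a j‖ := by
    intro j hj
    have := hlow j hj; linarith
  have hxj : ∀ j : Fin n, j ≠ i → ‖a i - a j‖ - ρ ≤ ‖x - a j‖ := by
    intro j hj
    have h1 := dist_triangle (a i) x (a j)
    rw [dist_eq_norm, dist_eq_norm, dist_eq_norm] at h1
    have h2 : ‖a i - x‖ = ‖x - a i‖ := norm_sub_rev _ _
    rw [hρdef]; linarith
  have hxjpos : ∀ j : Fin n, j ≠ i → ‖a i - a j‖ - r₀ ≤ ‖x - a j‖ := by
    intro j hj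
    have := hxj j hj; linarith [hxr]
  have hxjpos' : ∀ j : Fin n, j ≠ i → 0 < ‖x - a j‖ := by
    intro j hj
    have := hxjpos j hj; have := hsub j hj; linarith
  have hsymm : ∀ k j : Fin n, h k j = h j k := by
    intro k j
    simp only [hhdef]
    rw [norm_sub_rev (a k), mul_comm]
  -- key inequality for terms with one index equal to i
  have key1 : ∀ j : Fin n, j ≠ i →
      ‖a i - a j‖ ^ 2 / (ρ ^ 2 * ‖x - a j‖ ^ 2) ≤ A := by
    intro j hj
    have ht : 2 * d ≤ ‖a i - a j‖ := hlow j hj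
    have hs : ‖a i - a j‖ - r₀ ≤ ‖x - a j‖ := hxjpos j hj
    have hs0 : 0 < ‖x - a j‖ := hxjpos' j hj
    rw [hAdef, div_le_div_iff₀ (by positivity) (by positivity)]
    have h1 : ‖a i - a j‖ * (d - r₀) ≤ d * ‖x - a j‖ := by nlinarith
    have h2 : (‖a i - a j‖ * (d - r₀)) * (‖a i - a j‖ * (d - r₀)) ≤
        (d * ‖x - a j‖) * (d * ‖x - a j‖) :=
      mul_self_le_mul_self (by positivity) h1
    nlinarith [sq_nonneg ρ, mul_le_mul_of_nonneg_left h2 (sq_nonneg ρ)]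
  -- key inequality for terms with both indices ≠ i
  have key2 : ∀ k j : Fin n, k ≠ i → j ≠ i →
      ‖a k - a j‖ ^ 2 / (‖x - a k‖ ^ 2 * ‖x - a j‖ ^ 2) ≤ h k j := by
    intro k j hk hj
    have hk1 : 0 < ‖a i - a k‖ - r₀ := sub_pos.2 (hsub k hk)
    have hj1 : 0 < ‖a i - a j‖ - r₀ := sub_pos.2 (hsub j hj)
    have hk2 : ‖a i - a k‖ - r₀ ≤ ‖x - a k‖ := hxjpos k hk
    have hj2 : ‖a i - a j‖ - r₀ ≤ ‖x - a j‖ := hxjpos j hj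
    simp only [hhdef]
    gcongr
  -- termwise bound functions
  set G1 : Fin n → Fin n → ℝ := fun k j =>
    if k ≠ j ∧ (k = i ∨ j = i) then A else 0 with hG1def
  set G2 : Fin n → Fin n → ℝ := fun k j =>
    if k ≠ i ∧ j ≠ i ∧ k ≠ j then h k j else 0 with hG2def
  set C1 : Fin n → Fin n → ℝ := fun k j =>
    if k ≠ i ∧ j ≠ i ∧ k < j then h k j else 0 with hC1def
  have hA0 : 0 ≤ A := by positivity
  -- termwise inequality
  have hh0 : ∀ k j : Fin n, 0 ≤ h k j := by
    intro k j; simp only [hhdef]; positivity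
  have term : ∀ k j : Fin n,
      (if k = j then (0:ℝ) else ‖a k - a j‖ ^ 2 / (‖x - a k‖ ^ 2 * ‖x - a j‖ ^ 2))
        ≤ G1 k j + G2 k j := by
    intro k j
    have g1 : 0 ≤ G1 k j := by
      simp only [hG1def]; split_ifs; exacts [hA0, le_rfl]
    have g2 : 0 ≤ G2 k j := by
      simp only [hG2def]; split_ifs; exacts [hh0 k j, le_rfl]
    by_cases hkj : k = j
    · rw [if_pos hkj]; linarith
    · by_cases hk : k = i
      · have hj : j ≠ i := fun hji => hkj (hk.trans hji.symm)
        have e1 : G1 k j = A := by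
          simp only [hG1def]; exact if_pos ⟨hkj, Or.inl hk⟩
        rw [e1, if_neg hkj, hk, ← hρdef]
        rw [hk] at g2
        have := key1 j hj
        linarith
      · by_cases hj : j = i
        · have e1 : G1 k j = A := by
            simp only [hG1def]; exact if_pos ⟨hkj, Or.inr hj⟩
          rw [e1, if_neg hkj, hj]
          have hkey : ‖a k - a i‖ ^ 2 / (‖x - a k‖ ^ 2 * ‖x - a i‖ ^ 2)
              = ‖a i - a k‖ ^ 2 / (‖x - a i‖ ^ 2 * ‖x - a k‖ ^ 2) := by
            rw [norm_sub_rev (a k) (a i), mul_comm]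
          rw [hkey, ← hρdef]
          rw [hj] at g2
          have := key1 k hk
          linarith
        · have e1 : G1 k j = 0 := by
            simp only [hG1def]; exact if_neg (fun hc => hc.2.elim hk hj)
          have e2 : G2 k j = h k j := by
            simp only [hG2def]; exact if_pos ⟨hk, hj, hkj⟩
          rw [e1, e2, zero_add, if_neg hkj]
          exact key2 k j hk hj
  -- sum of G1
  have sumG1 : ∑ k : Fin n, ∑ j : Fin n, G1 k j = 2 * ((n:ℝ) - 1) * A := by
    have inner : ∀ k : Fin n, ∑ j : Fin n, G1 k j
        = if k = i then ((n:ℝ) - 1) * A else A := by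
      intro k
      by_cases hk : k = i
      · rw [if_pos hk]
        have hpt : ∀ j : Fin n, G1 k j = A - (if j = i then A else 0) := by
          intro j
          by_cases hj : j = i
          · have e : G1 k j = 0 := by
              simp only [hG1def]; exact if_neg (fun hc => hc.1 (hk.trans hj.symm))
            rw [e, if_pos hj]; ring
          · have e : G1 k j = A := by
              simp only [hG1def]
              exact if_pos ⟨fun hc => hj (hc.symm.trans hk), Or.inl hk⟩
            rw [e, if_neg hj]; ring
        rw [Finset.sum_congr rfl fun j _ => hpt j, Finset.sum_sub_distrib,
          Finset.sum_const, Finset.sum_ite_eq' Finset.univ i (fun _ => A),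
          if_pos (Finset.mem_univ i), Finset.card_univ, Fintype.card_fin,
          nsmul_eq_mul]
        ring
      · rw [if_neg hk]
        have hpt : ∀ j : Fin n, G1 k j = (if j = i then A else 0) := by
          intro j
          by_cases hj : j = i
          · have e : G1 k j = A := by
              simp only [hG1def]
              exact if_pos ⟨fun hc => hk (hc.trans hj), Or.inr hj⟩
            rw [e, if_pos hj]
          · have e : G1 k j = 0 := by
              simp only [hG1def]; exact if_neg (fun hc => hc.2.elim hk hj)
            rw [e, if_neg hj]
        rw [Finset.sum_congr rfl fun j _ => hpt j,
          Finset.sum_ite_eq' Finset.univ i (fun _ => A), if_pos (Finset.mem_univ i)]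
    rw [Finset.sum_congr rfl fun k _ => inner k]
    have hpt : ∀ k : Fin n, (if k = i then ((n:ℝ) - 1) * A else A)
        = A + (if k = i then ((n:ℝ) - 1) * A - A else 0) := by
      intro k; by_cases hk : k = i <;> simp [hk]
    rw [Finset.sum_congr rfl fun k _ => hpt k, Finset.sum_add_distrib,
      Finset.sum_const, Finset.sum_ite_eq' Finset.univ i
        (fun _ => ((n:ℝ) - 1) * A - A), if_pos (Finset.mem_univ i),
      Finset.card_univ, Fintype.card_fin, nsmul_eq_mul]
    ring
  -- sum of G2
  have sumG2 : ∑ k : Fin n, ∑ j : Fin n, G2 k j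
      = 2 * ∑ k : Fin n, ∑ j : Fin n, C1 k j := by
    have hsplit : ∀ k j : Fin n, G2 k j = C1 k j + C1 j k := by
      intro k j
      by_cases hk : k = i
      · have e0 : G2 k j = 0 := by
          simp only [hG2def]; exact if_neg (fun hc => hc.1 hk)
        have e1 : C1 k j = 0 := by
          simp only [hC1def]; exact if_neg (fun hc => hc.1 hk)
        have e2 : C1 j k = 0 := by
          simp only [hC1def]; exact if_neg (fun hc => hc.2.1 hk)
        rw [e0, e1, e2, add_zero]
      · by_cases hj : j = i
        · have e0 : G2 k j = 0 := by
            simp only [hG2def]; exact if_neg (fun hc => hc.2.1 hj)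
          have e1 : C1 k j = 0 := by
            simp only [hC1def]; exact if_neg (fun hc => hc.2.1 hj)
          have e2 : C1 j k = 0 := by
            simp only [hC1def]; exact if_neg (fun hc => hc.1 hj)
          rw [e0, e1, e2, add_zero]
        · rcases lt_trichotomy k j with hlt | heq | hgt
          · have e0 : G2 k j = h k j := by
              simp only [hG2def]; exact if_pos ⟨hk, hj, hlt.ne⟩
            have e1 : C1 k j = h k j := by
              simp only [hC1def]; exact if_pos ⟨hk, hj, hlt⟩
            have e2 : C1 j k = 0 := by
              simp only [hC1def]; exact if_neg (fun hc => not_lt_of_gt hlt hc.2.2)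
            rw [e0, e1, e2, add_zero]
          · have e0 : G2 k j = 0 := by
              simp only [hG2def]; exact if_neg (fun hc => hc.2.2 heq)
            have e1 : C1 k j = 0 := by
              simp only [hC1def]
              exact if_neg (fun hc => absurd hc.2.2 (heq ▸ lt_irrefl k))
            have e2 : C1 j k = 0 := by
              simp only [hC1def]
              exact if_neg (fun hc => absurd hc.2.2 (heq ▸ lt_irrefl k))
            rw [e0, e1, e2, add_zero]
          · have e0 : G2 k j = h k j := by
              simp only [hG2def]; exact if_pos ⟨hk, hj, hgt.ne'⟩
            have e1 : C1 k j = 0 := by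
              simp only [hC1def]; exact if_neg (fun hc => not_lt_of_gt hgt hc.2.2)
            have e2 : C1 j k = h j k := by
              simp only [hC1def]; exact if_pos ⟨hj, hk, hgt⟩
            rw [e0, e1, e2, zero_add]
            exact hsymm k j
    calc ∑ k : Fin n, ∑ j : Fin n, G2 k j
        = ∑ k : Fin n, ∑ j : Fin n, (C1 k j + C1 j k) := by
          exact Finset.sum_congr rfl fun k _ =>
            Finset.sum_congr rfl fun j _ => hsplit k j
      _ = (∑ k : Fin n, ∑ j : Fin n, C1 k j)
          + ∑ k : Fin n, ∑ j : Fin n, C1 j k := by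
          simp [Finset.sum_add_distrib]
      _ = (∑ k : Fin n, ∑ j : Fin n, C1 k j)
          + ∑ j : Fin n, ∑ k : Fin n, C1 j k := by rw [Finset.sum_comm]
      _ = 2 * ∑ k : Fin n, ∑ j : Fin n, C1 k j := by ring
  -- put everything together
  have main : (∑ k : Fin n, ∑ j : Fin n, if k = j then (0:ℝ) else
      ‖a k - a j‖ ^ 2 / (‖x - a k‖ ^ 2 * ‖x - a j‖ ^ 2))
      ≤ 2 * ((n:ℝ) - 1) * A + 2 * ∑ k : Fin n, ∑ j : Fin n, C1 k j := by
    calc (∑ k : Fin n, ∑ j : Fin n, if k = j then (0:ℝ) else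
        ‖a k - a j‖ ^ 2 / (‖x - a k‖ ^ 2 * ‖x - a j‖ ^ 2))
        ≤ ∑ k : Fin n, ∑ j : Fin n, (G1 k j + G2 k j) :=
          Finset.sum_le_sum fun k _ => Finset.sum_le_sum fun j _ => term k j
      _ = (∑ k : Fin n, ∑ j : Fin n, G1 k j) + ∑ k : Fin n, ∑ j : Fin n, G2 k j := by
          simp [Finset.sum_add_distrib]
      _ = 2 * ((n:ℝ) - 1) * A + 2 * ∑ k : Fin n, ∑ j : Fin n, C1 k j := by
          rw [sumG1, sumG2]
  have hRHS : ((n : ℝ) - 1) * d ^ 2 / ((d - r₀) ^ 2 * ρ ^ 2)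
      = ((n:ℝ) - 1) * A := by
    rw [hAdef]; ring
  have hC1match : (∑ k : Fin n, ∑ j : Fin n, C1 k j)
      = ∑ k : Fin n, ∑ j : Fin n, if k ≠ i ∧ j ≠ i ∧ k < j then
          ‖a k - a j‖ ^ 2 / ((‖a i - a k‖ - r₀) ^ 2 * (‖a i - a j‖ - r₀) ^ 2)
        else 0 := rfl
  rw [hRHS, ← hC1match]
  linarith [main]
end

section
/- Let i ∈ {1,…,n} and 0 < r_0 < d. Then for every x with 0 < |x − a_i| < r_0: W(x) ≥ (n − 1)·d²/((d + r_0)²·|x − a_i|²) + c_2, where c_2 := Σ_{k,j ∈ {1,…,n}\{i}, j > k} |a_k − a_j|²/((|a_i − a_k| + r_0)²(|a_i − a_j| + r_0)²). -/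
/-- Lower bound (3.5) for `W(x) = (1/2) Σ_{i≠j} |aᵢ−aⱼ|²/(|x−aᵢ|²|x−aⱼ|²)` in the
punctured ball `B(aᵢ, r₀) \ {aᵢ}`:
`W(x) ≥ (n−1) d²/((d+r₀)² |x−aᵢ|²) + c₂`, where
`c₂ = Σ_{k,j ≠ i, j > k} |a_k−a_j|²/((|aᵢ−a_k|+r₀)²(|aᵢ−a_j|+r₀)²)` and
`2d` is the minimal distance between distinct poles. -/
theorem stmt7
    {N n : ℕ} (hN : 3 ≤ N) (hn : 2 ≤ n)
    (a : Fin n → EuclideanSpace ℝ (Fin N)) (ha : Function.Injective a)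
    (d : ℝ) (hd : IsLeast {r : ℝ | ∃ i j : Fin n, i ≠ j ∧ r = ‖a i - a j‖} (2 * d))
    (i : Fin n) (r₀ : ℝ) (hr₀ : 0 < r₀) (hr₀d : r₀ < d)
    (x : EuclideanSpace ℝ (Fin N)) (hx : 0 < ‖x - a i‖) (hxr : ‖x - a i‖ < r₀) :
    1 / 2 * (∑ k, ∑ j, if k = j then 0 else
        ‖a k - a j‖ ^ 2 / (‖x - a k‖ ^ 2 * ‖x - a j‖ ^ 2))
      ≥ ((n : ℝ) - 1) * d ^ 2 / ((d + r₀) ^ 2 * ‖x - a i‖ ^ 2)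
        + ∑ k, ∑ j, if k ≠ i ∧ j ≠ i ∧ k < j then
            ‖a k - a j‖ ^ 2 / ((‖a i - a k‖ + r₀) ^ 2 * (‖a i - a j‖ + r₀) ^ 2)
          else 0 := by
  classical
  obtain ⟨⟨i₀, j₀, hij₀, h2d⟩, hlb⟩ := hd
  have hdpos : 0 < d := by
    have h0 : 0 < ‖a i₀ - a j₀‖ := by
      rw [norm_pos_iff, sub_ne_zero]
      exact fun h => hij₀ (ha h)
    nlinarith
  have hmin : ∀ k j : Fin n, k ≠ j → 2 * d ≤ ‖a k - a j‖ := by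
    intro k j h
    exact hlb ⟨k, j, h, rfl⟩
  set F : Fin n → Fin n → ℝ := fun k j => if k = j then 0 else
    ‖a k - a j‖ ^ 2 / (‖x - a k‖ ^ 2 * ‖x - a j‖ ^ 2) with hF
  set c : Fin n → Fin n → ℝ := fun k j =>
    ‖a k - a j‖ ^ 2 / ((‖a i - a k‖ + r₀) ^ 2 * (‖a i - a j‖ + r₀) ^ 2) with hc
  set dt : ℝ := d ^ 2 / ((d + r₀) ^ 2 * ‖x - a i‖ ^ 2) with hdt
  have hxub : ∀ k : Fin n, k ≠ i → ‖x - a k‖ ≤ ‖a i - a k‖ + r₀ := by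
    intro k hk
    have h1 : ‖x - a k‖ ≤ ‖x - a i‖ + ‖a i - a k‖ := by
      calc ‖x - a k‖ = ‖(x - a i) + (a i - a k)‖ := by rw [sub_add_sub_cancel]
        _ ≤ ‖x - a i‖ + ‖a i - a k‖ := norm_add_le _ _
    linarith
  have hxlb : ∀ k : Fin n, k ≠ i → 0 < ‖x - a k‖ := by
    intro k hk
    have h1 : ‖a i - a k‖ ≤ ‖a i - x‖ + ‖x - a k‖ := by
      calc ‖a i - a k‖ = ‖(a i - x) + (x - a k)‖ := by rw [sub_add_sub_cancel]
        _ ≤ ‖a i - x‖ + ‖x - a k‖ := norm_add_le _ _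
    have h2 : 2 * d ≤ ‖a i - a k‖ := hmin i k (Ne.symm hk)
    have h3 : ‖a i - x‖ = ‖x - a i‖ := norm_sub_rev _ _
    linarith
  have key1 : ∀ j : Fin n, j ≠ i → dt ≤ F i j := by
    intro j hj
    have hji : i ≠ j := Ne.symm hj
    simp only [hF, if_neg hji, hdt]
    have hs : 2 * d ≤ ‖a i - a j‖ := hmin i j hji
    have hub : ‖x - a j‖ ≤ ‖a i - a j‖ + r₀ := hxub j hj
    have hpos : 0 < ‖x - a j‖ := hxlb j hj
    have h1 : d * (‖a i - a j‖ + r₀) ≤ ‖a i - a j‖ * (d + r₀) := by nlinarith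
    have h2 : d * ‖x - a j‖ ≤ ‖a i - a j‖ * (d + r₀) := by nlinarith
    have h5 : (d * ‖x - a j‖) ^ 2 ≤ (‖a i - a j‖ * (d + r₀)) ^ 2 :=
      pow_le_pow_left₀ (by positivity) h2 2
    have h6 := mul_le_mul_of_nonneg_right h5 (sq_nonneg ‖x - a i‖)
    rw [div_le_div_iff₀ (by positivity) (by positivity)]
    nlinarith [h6]
  have key2 : ∀ k j : Fin n, k ≠ i → j ≠ i → k ≠ j → c k j ≤ F k j := by
    intro k j hk hj hkj
    simp only [hF, if_neg hkj, hc]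
    have h1 := hxub k hk
    have h2 := hxub j hj
    have h3 := hxlb k hk
    have h4 := hxlb j hj
    apply div_le_div_of_nonneg_left (by positivity) (by positivity)
    have h5 : ‖x - a k‖ ^ 2 ≤ (‖a i - a k‖ + r₀) ^ 2 := pow_le_pow_left₀ h3.le h1 2
    have h6 : ‖x - a j‖ ^ 2 ≤ (‖a i - a j‖ + r₀) ^ 2 := pow_le_pow_left₀ h4.le h2 2
    exact mul_le_mul h5 h6 (by positivity) (by positivity)
  set e : Finset (Fin n) := Finset.univ.erase i with he
  have hcard : (e.card : ℝ) = (n : ℝ) - 1 := by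
    rw [he, Finset.card_erase_of_mem (Finset.mem_univ i), Finset.card_univ, Fintype.card_fin]
    have : 1 ≤ n := by omega
    push_cast [Nat.cast_sub this]
    ring
  have split : ∑ k, ∑ j, F k j
      = (∑ j ∈ e, F i j) + ((∑ k ∈ e, F k i) + ∑ k ∈ e, ∑ j ∈ e, F k j) := by
    rw [← Finset.add_sum_erase _ (fun k => ∑ j, F k j) (Finset.mem_univ i), ← he]
    congr 1
    · rw [← Finset.add_sum_erase _ (F i) (Finset.mem_univ i), ← he]
      simp [hF]
    · rw [← Finset.sum_add_distrib]
      apply Finset.sum_congr rfl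
      intro k hk
      rw [← Finset.add_sum_erase _ (F k) (Finset.mem_univ i), ← he]
  have hFsym : ∀ k j, F k j = F j k := by
    intro k j
    simp only [hF]
    rcases eq_or_ne k j with h | h
    · simp [h]
    · rw [if_neg h, if_neg (Ne.symm h), norm_sub_rev (a k), mul_comm]
  have bound1 : ((n:ℝ) - 1) * dt ≤ ∑ j ∈ e, F i j := by
    calc ((n:ℝ) - 1) * dt = ∑ _j ∈ e, dt := by rw [Finset.sum_const, nsmul_eq_mul, hcard]
      _ ≤ ∑ j ∈ e, F i j := by
          apply Finset.sum_le_sum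
          intro j hj
          exact key1 j (Finset.ne_of_mem_erase hj)
  have bound2 : ((n:ℝ) - 1) * dt ≤ ∑ k ∈ e, F k i := by
    calc ((n:ℝ) - 1) * dt ≤ ∑ k ∈ e, F i k := bound1
      _ = ∑ k ∈ e, F k i := Finset.sum_congr rfl (fun k _ => hFsym i k)
  -- the c₂ sum
  set C : ℝ := ∑ k, ∑ j, if k ≠ i ∧ j ≠ i ∧ k < j then c k j else 0 with hC
  have hCe : C = ∑ k ∈ e, ∑ j ∈ e, (if k < j then c k j else 0) := by
    rw [hC, ← Finset.add_sum_erase _ _ (Finset.mem_univ i), ← he]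
    have h0 : (∑ j, if i ≠ i ∧ j ≠ i ∧ i < j then c i j else 0) = 0 := by
      simp
    rw [h0, zero_add]
    apply Finset.sum_congr rfl
    intro k hk
    rw [← Finset.add_sum_erase _ _ (Finset.mem_univ i), ← he]
    have h1 : (if k ≠ i ∧ i ≠ i ∧ k < i then c k i else 0) = 0 := by simp
    rw [h1, zero_add]
    apply Finset.sum_congr rfl
    intro j hj
    have hki : k ≠ i := Finset.ne_of_mem_erase hk
    have hji : j ≠ i := Finset.ne_of_mem_erase hj
    simp [hki, hji]
  have bound3 : 2 * C ≤ ∑ k ∈ e, ∑ j ∈ e, F k j := by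
    have step1 : ∑ k ∈ e, ∑ j ∈ e, ((if k < j then c k j else 0) + (if j < k then c k j else 0))
        ≤ ∑ k ∈ e, ∑ j ∈ e, F k j := by
      apply Finset.sum_le_sum
      intro k hk
      apply Finset.sum_le_sum
      intro j hj
      have hki : k ≠ i := Finset.ne_of_mem_erase hk
      have hji : j ≠ i := Finset.ne_of_mem_erase hj
      rcases lt_trichotomy k j with h | h | h
      · rw [if_pos h, if_neg (asymm h), add_zero]
        exact key2 k j hki hji (ne_of_lt h)
      · simp [hF, h]
      · rw [if_neg (asymm h), if_pos h, zero_add]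
        exact key2 k j hki hji (ne_of_gt h)
    have step2 : ∑ k ∈ e, ∑ j ∈ e, ((if k < j then c k j else 0) + (if j < k then c k j else 0))
        = 2 * C := by
      rw [hCe]
      have : ∑ k ∈ e, ∑ j ∈ e, ((if k < j then c k j else 0) + (if j < k then c k j else 0))
          = (∑ k ∈ e, ∑ j ∈ e, (if k < j then c k j else 0))
            + ∑ k ∈ e, ∑ j ∈ e, (if j < k then c k j else 0) := by
        rw [← Finset.sum_add_distrib]
        apply Finset.sum_congr rfl
        intro k _
        rw [← Finset.sum_add_distrib]
      rw [this]
      have hswap : ∑ k ∈ e, ∑ j ∈ e, (if j < k then c k j else 0)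
          = ∑ k ∈ e, ∑ j ∈ e, (if k < j then c k j else 0) := by
        rw [Finset.sum_comm]
        apply Finset.sum_congr rfl
        intro k _
        apply Finset.sum_congr rfl
        intro j _
        have hcsym : c j k = c k j := by
          simp only [hc]
          rw [norm_sub_rev (a j), mul_comm]
        rw [hcsym]
      rw [hswap]; ring
    linarith
  have total : 2 * (((n:ℝ) - 1) * dt) + 2 * C ≤ ∑ k, ∑ j, F k j := by
    rw [split]; linarith
  have goal : ((n:ℝ) - 1) * d ^ 2 / ((d + r₀) ^ 2 * ‖x - a i‖ ^ 2) + C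
      ≤ 1 / 2 * ∑ k, ∑ j, F k j := by
    have hdt' : ((n:ℝ) - 1) * d ^ 2 / ((d + r₀) ^ 2 * ‖x - a i‖ ^ 2) = ((n:ℝ) - 1) * dt := by
      rw [hdt]; ring
    rw [hdt']
    linarith
  exact goal
end

section
/- Let k ∈ {1,…,n} and 0 < ε < d. Then for every x with 0 < |x − a_k| < ε: Σ_{i,j=1, i≠j}^n (x − a_i)·(x − a_j)/(|x − a_i|²|x − a_j|²) ≤ (n − 1)·(1 − d²/(d + ε)²)/|x − a_k|² + c_3, where c_3 := (n − 1)·Σ_{i ∈ {1,…,n}\{k}} 1/(|a_k − a_i| − ε)² − Σ_{i,j ∈ {1,…,n}\{k}, j > i} |a_i − a_j|²/((|a_k − a_i| + ε)²(|a_k − a_j| + ε)²). -/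
open RealInnerProductSpace

open Finset

theorem sum_bound_eq {n : ℕ} (k : Fin n) (Kv : ℝ) (g : Fin n → ℝ) (cb : Fin n → Fin n → ℝ)
    (hsymm : ∀ i j, cb i j = cb j i) :
    (∑ i, ∑ j, if i = j then 0 else
        ((if i = k then Kv else g i) + (if j = k then Kv else g j)) / 2
          - (if i ≠ k ∧ j ≠ k then cb i j else 0) / 2)
      = ((n : ℝ) - 1) * Kv + ((n : ℝ) - 1) * (∑ i, if i ≠ k then g i else 0)
        - ∑ i, ∑ j, if i ≠ k ∧ j ≠ k ∧ i < j then cb i j else 0 := by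
  set h : Fin n → ℝ := fun i => if i = k then Kv else g i with hh
  have hterm : ∀ i j : Fin n,
      (if i = j then (0:ℝ) else (h i + h j) / 2 - (if i ≠ k ∧ j ≠ k then cb i j else 0) / 2)
      = ((if i = j then 0 else h i / 2) + (if i = j then 0 else h j / 2))
        - (if i ≠ k ∧ j ≠ k ∧ i < j then cb i j / 2 else 0)
        - (if i ≠ k ∧ j ≠ k ∧ j < i then cb i j / 2 else 0) := by
    intro i j
    by_cases hij : i = j
    · subst hij; simp [lt_irrefl]
    · rw [if_neg hij, if_neg hij, if_neg hij]
      by_cases hik : i = k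
      · rw [if_neg (by rintro ⟨h1, -⟩; exact h1 hik), if_neg (by rintro ⟨h1, -⟩; exact h1 hik),
            if_neg (by rintro ⟨h1, -⟩; exact h1 hik)]
        ring
      · by_cases hjk : j = k
        · rw [if_neg (by rintro ⟨-, h1⟩; exact h1 hjk), if_neg (by rintro ⟨-, h1, -⟩; exact h1 hjk),
              if_neg (by rintro ⟨-, h1, -⟩; exact h1 hjk)]
          ring
        · rcases lt_or_gt_of_ne hij with hlt | hgt
          · rw [if_pos ⟨hik, hjk⟩, if_pos ⟨hik, hjk, hlt⟩, if_neg (by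
              rintro ⟨-, -, hc⟩; exact absurd hc (not_lt.2 hlt.le))]
            ring
          · rw [if_pos ⟨hik, hjk⟩, if_neg (by
              rintro ⟨-, -, hc⟩; exact absurd hc (not_lt.2 hgt.le)), if_pos ⟨hik, hjk, hgt⟩]
            ring
  have hterm' : ∀ i j : Fin n,
      (if i = j then (0:ℝ) else ((if i = k then Kv else g i) + (if j = k then Kv else g j)) / 2
        - (if i ≠ k ∧ j ≠ k then cb i j else 0) / 2)
      = ((if i = j then 0 else h i / 2) + (if i = j then 0 else h j / 2))
        - (if i ≠ k ∧ j ≠ k ∧ i < j then cb i j / 2 else 0)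
        - (if i ≠ k ∧ j ≠ k ∧ j < i then cb i j / 2 else 0) := hterm
  simp_rw [hterm', Finset.sum_sub_distrib, Finset.sum_add_distrib]
  have inner1 : ∀ c : ℝ, ∀ i : Fin n, (∑ j : Fin n, if i = j then 0 else c) = ((n:ℝ)-1) * c := by
    intro c i
    have e : (∑ j : Fin n, if i = j then (0:ℝ) else c)
        = ∑ j : Fin n, (c - if i = j then c else 0) := by
      apply Finset.sum_congr rfl; intro j _; split_ifs <;> ring
    rw [e, Finset.sum_sub_distrib, Finset.sum_const, Finset.sum_ite_eq, if_pos (Finset.mem_univ i)]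
    simp [Finset.card_univ]
    ring
  have inner1' : ∀ c : ℝ, ∀ j : Fin n, (∑ i : Fin n, if i = j then 0 else c) = ((n:ℝ)-1) * c := by
    intro c j
    have e : (∑ i : Fin n, if i = j then (0:ℝ) else c)
        = ∑ i : Fin n, (c - if i = j then c else 0) := by
      apply Finset.sum_congr rfl; intro i _; split_ifs <;> ring
    rw [e, Finset.sum_sub_distrib, Finset.sum_const, Finset.sum_ite_eq', if_pos (Finset.mem_univ j)]
    simp [Finset.card_univ]
    ring
  have hA1 : (∑ i : Fin n, ∑ j : Fin n, if i = j then (0:ℝ) else h i / 2)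
      = ((n:ℝ)-1) * (∑ i, h i) / 2 := by
    have : ∀ i : Fin n, (∑ j : Fin n, if i = j then (0:ℝ) else h i / 2) = ((n:ℝ)-1) * (h i / 2) :=
      fun i => inner1 _ i
    rw [Finset.sum_congr rfl (fun i _ => this i), Finset.mul_sum, Finset.sum_div]
    exact Finset.sum_congr rfl (fun i _ => by ring)
  have hA2 : (∑ i : Fin n, ∑ j : Fin n, if i = j then (0:ℝ) else h j / 2)
      = ((n:ℝ)-1) * (∑ i, h i) / 2 := by
    rw [Finset.sum_comm]
    have : ∀ j : Fin n, (∑ i : Fin n, if i = j then (0:ℝ) else h j / 2) = ((n:ℝ)-1) * (h j / 2) :=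
      fun j => inner1' _ j
    rw [Finset.sum_congr rfl (fun j _ => this j), Finset.mul_sum, Finset.sum_div]
    exact Finset.sum_congr rfl (fun j _ => by ring)
  have hsumh : (∑ i, h i) = Kv + ∑ i, (if i ≠ k then g i else 0) := by
    have e : ∀ i : Fin n, h i = (if i = k then Kv else 0) + (if i ≠ k then g i else 0) := by
      intro i; simp only [hh]; by_cases hik : i = k <;> simp [hik]
    rw [Finset.sum_congr rfl (fun i _ => e i), Finset.sum_add_distrib,
      Finset.sum_ite_eq' Finset.univ k (fun _ => Kv), if_pos (Finset.mem_univ k)]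
  have hC : (∑ i : Fin n, ∑ j : Fin n, if i ≠ k ∧ j ≠ k ∧ j < i then cb i j / 2 else 0)
      = (∑ i : Fin n, ∑ j : Fin n, if i ≠ k ∧ j ≠ k ∧ i < j then cb i j / 2 else 0) := by
    rw [Finset.sum_comm]
    apply Finset.sum_congr rfl; intro i _
    apply Finset.sum_congr rfl; intro j _
    exact if_congr (by tauto) (by rw [hsymm]) rfl
  have hCC : (∑ i : Fin n, ∑ j : Fin n, if i ≠ k ∧ j ≠ k ∧ i < j then cb i j else 0)
      = (∑ i : Fin n, ∑ j : Fin n, if i ≠ k ∧ j ≠ k ∧ i < j then cb i j / 2 else 0)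
        + (∑ i : Fin n, ∑ j : Fin n, if i ≠ k ∧ j ≠ k ∧ i < j then cb i j / 2 else 0) := by
    rw [← Finset.sum_add_distrib]
    apply Finset.sum_congr rfl; intro i _
    rw [← Finset.sum_add_distrib]
    apply Finset.sum_congr rfl; intro j _
    split_ifs <;> ring
  rw [hA1, hA2, hC, hsumh]
  rw [hCC]
  ring

set_option maxHeartbeats 1000000

/-- Estimate of the mixed term in the punctured ball `B(a_k, ε) \ {a_k}` (bound for `I₁`):
`Σ_{i≠j} (x−aᵢ)·(x−aⱼ)/(|x−aᵢ|²|x−aⱼ|²) ≤ (n−1)(1 − d²/(d+ε)²)/|x−a_k|² + c₃`,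
where `c₃ = (n−1) Σ_{i≠k} 1/(|a_k−aᵢ|−ε)² − Σ_{i,j≠k, j>i} |aᵢ−aⱼ|²/((|a_k−aᵢ|+ε)²(|a_k−aⱼ|+ε)²)`
and `2d` is the minimal distance between distinct poles. -/
theorem stmt10
    {N n : ℕ} (hN : 3 ≤ N) (hn : 2 ≤ n)
    (a : Fin n → EuclideanSpace ℝ (Fin N)) (ha : Function.Injective a)
    (d : ℝ) (hd : IsLeast {r : ℝ | ∃ i j : Fin n, i ≠ j ∧ r = ‖a i - a j‖} (2 * d))
    (k : Fin n) (ε : ℝ) (hε : 0 < ε) (hεd : ε < d)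
    (x : EuclideanSpace ℝ (Fin N)) (hx : 0 < ‖x - a k‖) (hxε : ‖x - a k‖ < ε) :
    (∑ i, ∑ j, if i = j then 0 else
        ⟪x - a i, x - a j⟫ / (‖x - a i‖ ^ 2 * ‖x - a j‖ ^ 2))
      ≤ ((n : ℝ) - 1) * (1 - d ^ 2 / (d + ε) ^ 2) / ‖x - a k‖ ^ 2
        + ((∑ i, if i ≠ k then ((n : ℝ) - 1) / (‖a k - a i‖ - ε) ^ 2 else 0)
          - ∑ i, ∑ j, if i ≠ k ∧ j ≠ k ∧ i < j then
              ‖a i - a j‖ ^ 2 / ((‖a k - a i‖ + ε) ^ 2 * (‖a k - a j‖ + ε) ^ 2)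
            else 0) := by
  obtain ⟨⟨i0, j0, hij0, h2d⟩, hlb⟩ := hd
  have hd0 : 0 < d := by
    have h1 : 0 < ‖a i0 - a j0‖ := by
      rw [norm_pos_iff, sub_ne_zero]
      exact fun hcon => hij0 (ha hcon)
    rw [← h2d] at h1; linarith
  have hsep : ∀ i : Fin n, i ≠ k → 2 * d ≤ ‖a k - a i‖ := fun i hi =>
    hlb ⟨k, i, fun hcon => hi hcon.symm, rfl⟩
  have key : ∀ i : Fin n, i ≠ k →
      0 < ‖a k - a i‖ - ε ∧ ‖a k - a i‖ - ε ≤ ‖x - a i‖ ∧ ‖x - a i‖ ≤ ‖a k - a i‖ + ε := by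
    intro i hi
    have h1 := hsep i hi
    have t1 : ‖a k - a i‖ ≤ ‖a k - x‖ + ‖x - a i‖ := norm_sub_le_norm_sub_add_norm_sub _ _ _
    have t2 : ‖x - a i‖ ≤ ‖x - a k‖ + ‖a k - a i‖ := norm_sub_le_norm_sub_add_norm_sub _ _ _
    have t3 : ‖a k - x‖ = ‖x - a k‖ := norm_sub_rev _ _
    exact ⟨by linarith, by linarith, by linarith⟩
  have hf0 : ∀ i : Fin n, 0 < ‖x - a i‖ := by
    intro i
    by_cases hik : i = k
    · rw [hik]; exact hx
    · exact lt_of_lt_of_le (key i hik).1 (key i hik).2.1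
  have hdε : (0:ℝ) < d + ε := by linarith
  set Kv : ℝ := (1 - d ^ 2 / (d + ε) ^ 2) / ‖x - a k‖ ^ 2 with hKv
  set g : Fin n → ℝ := fun i => 1 / (‖a k - a i‖ - ε) ^ 2 with hg
  set cb : Fin n → Fin n → ℝ := fun i j =>
    ‖a i - a j‖ ^ 2 / ((‖a k - a i‖ + ε) ^ 2 * (‖a k - a j‖ + ε) ^ 2) with hcb
  have step1 : (∑ i, ∑ j, if i = j then 0 else
        ⟪x - a i, x - a j⟫ / (‖x - a i‖ ^ 2 * ‖x - a j‖ ^ 2))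
      ≤ ∑ i, ∑ j, (if i = j then 0 else
        ((if i = k then Kv else g i) + (if j = k then Kv else g j)) / 2
          - (if i ≠ k ∧ j ≠ k then cb i j else 0) / 2) := by
    apply Finset.sum_le_sum
    intro i _
    apply Finset.sum_le_sum
    intro j _
    by_cases hij : i = j
    · rw [if_pos hij, if_pos hij]
    rw [if_neg hij, if_neg hij]
    have hin : ⟪x - a i, x - a j⟫
        = (‖x - a i‖ ^ 2 + ‖x - a j‖ ^ 2 - ‖a i - a j‖ ^ 2) / 2 := by
      have h1 : ‖(x - a i) - (x - a j)‖ ^ 2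
          = ‖x - a i‖ ^ 2 - 2 * ⟪x - a i, x - a j⟫ + ‖x - a j‖ ^ 2 :=
        norm_sub_sq_real _ _
      have h2 : (x - a i) - (x - a j) = a j - a i := by abel
      rw [h2, norm_sub_rev] at h1
      linarith
    have hxk2 : ‖x - a k‖ ^ 2 ≠ 0 := (pow_pos hx 2).ne'
    by_cases hik : i = k
    · have hjk : j ≠ k := fun hcon => hij (hik.trans hcon.symm)
      rw [hik] at hin ⊢
      rw [if_pos rfl, if_neg hjk, if_neg (fun hcon => hcon.1 rfl)]
      obtain ⟨hs, hl, hu⟩ := key j hjk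
      have hfj := hf0 j
      have hfj2 : ‖x - a j‖ ^ 2 ≠ 0 := (pow_pos hfj 2).ne'
      have e2 : 1 / ‖x - a j‖ ^ 2 ≤ g j :=
        one_div_le_one_div_of_le (pow_pos hs 2) (pow_le_pow_left₀ hs.le hl 2)
      have hr : d ^ 2 / (d + ε) ^ 2 ≤ ‖a k - a j‖ ^ 2 / ‖x - a j‖ ^ 2 := by
        rw [div_le_div_iff₀ (by positivity) (pow_pos hfj 2)]
        have h1 : d * ‖x - a j‖ ≤ d * (‖a k - a j‖ + ε) :=
          mul_le_mul_of_nonneg_left hu hd0.le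
        have h2 : d * (‖a k - a j‖ + ε) ≤ ‖a k - a j‖ * (d + ε) := by
          nlinarith [hsep j hjk, hε]
        have h3 : (d * ‖x - a j‖) ^ 2 ≤ (‖a k - a j‖ * (d + ε)) ^ 2 :=
          pow_le_pow_left₀ (by positivity) (h1.trans h2) 2
        nlinarith [h3]
      have e3 : (1 - ‖a k - a j‖ ^ 2 / ‖x - a j‖ ^ 2) / ‖x - a k‖ ^ 2 ≤ Kv := by
        rw [hKv]
        gcongr
        all_goals linarith
      have heq : ⟪x - a k, x - a j⟫ / (‖x - a k‖ ^ 2 * ‖x - a j‖ ^ 2)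
          = (1 / ‖x - a j‖ ^ 2) / 2
            + ((1 - ‖a k - a j‖ ^ 2 / ‖x - a j‖ ^ 2) / ‖x - a k‖ ^ 2) / 2 := by
        rw [hin]
        field_simp
        ring
      rw [heq]
      linarith
    by_cases hjk : j = k
    · rw [hjk] at hin ⊢
      rw [if_neg hik, if_pos rfl, if_neg (fun hcon => hcon.2 rfl)]
      obtain ⟨hs, hl, hu⟩ := key i hik
      have hfi := hf0 i
      have hfi2 : ‖x - a i‖ ^ 2 ≠ 0 := (pow_pos hfi 2).ne'
      have e2 : 1 / ‖x - a i‖ ^ 2 ≤ g i :=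
        one_div_le_one_div_of_le (pow_pos hs 2) (pow_le_pow_left₀ hs.le hl 2)
      have hr : d ^ 2 / (d + ε) ^ 2 ≤ ‖a k - a i‖ ^ 2 / ‖x - a i‖ ^ 2 := by
        rw [div_le_div_iff₀ (by positivity) (pow_pos hfi 2)]
        have h1 : d * ‖x - a i‖ ≤ d * (‖a k - a i‖ + ε) :=
          mul_le_mul_of_nonneg_left hu hd0.le
        have h2 : d * (‖a k - a i‖ + ε) ≤ ‖a k - a i‖ * (d + ε) := by
          nlinarith [hsep i hik, hε]
        have h3 : (d * ‖x - a i‖) ^ 2 ≤ (‖a k - a i‖ * (d + ε)) ^ 2 :=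
          pow_le_pow_left₀ (by positivity) (h1.trans h2) 2
        nlinarith [h3]
      have e3 : (1 - ‖a k - a i‖ ^ 2 / ‖x - a i‖ ^ 2) / ‖x - a k‖ ^ 2 ≤ Kv := by
        rw [hKv]
        gcongr
        all_goals linarith
      have heq : ⟪x - a i, x - a k⟫ / (‖x - a i‖ ^ 2 * ‖x - a k‖ ^ 2)
          = (1 / ‖x - a i‖ ^ 2) / 2
            + ((1 - ‖a k - a i‖ ^ 2 / ‖x - a i‖ ^ 2) / ‖x - a k‖ ^ 2) / 2 := by
        rw [hin, norm_sub_rev (a i) (a k)]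
        field_simp
        ring
      rw [heq]
      linarith
    · rw [if_neg hik, if_neg hjk, if_pos ⟨hik, hjk⟩]
      obtain ⟨hsi, hli, hui⟩ := key i hik
      obtain ⟨hsj, hlj, huj⟩ := key j hjk
      have hfi := hf0 i
      have hfj := hf0 j
      have hfi2 : ‖x - a i‖ ^ 2 ≠ 0 := (pow_pos hfi 2).ne'
      have hfj2 : ‖x - a j‖ ^ 2 ≠ 0 := (pow_pos hfj 2).ne'
      have e1 : 1 / ‖x - a i‖ ^ 2 ≤ g i :=
        one_div_le_one_div_of_le (pow_pos hsi 2) (pow_le_pow_left₀ hsi.le hli 2)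
      have e2 : 1 / ‖x - a j‖ ^ 2 ≤ g j :=
        one_div_le_one_div_of_le (pow_pos hsj 2) (pow_le_pow_left₀ hsj.le hlj 2)
      have e3 : cb i j ≤ ‖a i - a j‖ ^ 2 / (‖x - a i‖ ^ 2 * ‖x - a j‖ ^ 2) := by
        simp only [hcb]
        apply div_le_div_of_nonneg_left (by positivity)
          (mul_pos (pow_pos hfi 2) (pow_pos hfj 2))
        have p1 : ‖x - a i‖ ^ 2 ≤ (‖a k - a i‖ + ε) ^ 2 :=
          pow_le_pow_left₀ (norm_nonneg _) hui 2
        have p2 : ‖x - a j‖ ^ 2 ≤ (‖a k - a j‖ + ε) ^ 2 :=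
          pow_le_pow_left₀ (norm_nonneg _) huj 2
        nlinarith [p1, p2, sq_nonneg ‖x - a i‖, sq_nonneg ‖x - a j‖]
      have heq : ⟪x - a i, x - a j⟫ / (‖x - a i‖ ^ 2 * ‖x - a j‖ ^ 2)
          = (1 / ‖x - a i‖ ^ 2) / 2 + (1 / ‖x - a j‖ ^ 2) / 2
            - (‖a i - a j‖ ^ 2 / (‖x - a i‖ ^ 2 * ‖x - a j‖ ^ 2)) / 2 := by
        rw [hin]
        field_simp
        ring
      rw [heq]
      linarith
  refine le_trans step1 (le_of_eq ?_)
  rw [sum_bound_eq k Kv g cb (fun i j => by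
    simp only [hcb]
    rw [norm_sub_rev, mul_comm])]
  have hA : ((n:ℝ) - 1) * Kv = ((n:ℝ) - 1) * (1 - d ^ 2 / (d + ε) ^ 2) / ‖x - a k‖ ^ 2 :=
    (mul_div_assoc _ _ _).symm
  have hB : ((n:ℝ) - 1) * (∑ i, if i ≠ k then g i else 0)
      = ∑ i, if i ≠ k then ((n:ℝ) - 1) / (‖a k - a i‖ - ε) ^ 2 else 0 := by
    rw [Finset.mul_sum]
    refine Finset.sum_congr rfl fun i _ => ?_
    simp only [hg]
    split_ifs
    · rw [mul_one_div]
    · rw [mul_zero]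
  rw [hA, hB]
  simp only [hcb]
  ring
end

section
/- Let k ∈ {1,…,n}, ε > 0 and δ > 0 with ε + δ < d. Then for every x with ε ≤ |x − a_k| < ε + δ: Σ_{i,j=1, i≠j}^n (x − a_i)·(x − a_j)/(|x − a_i|²|x − a_j|²) ≤ (n/ε)·Σ_{j ∈ {1,…,n}\{k}} 1/(|a_k − a_j| − (ε + δ)). -/
open RealInnerProductSpace

/-- Estimate of the mixed term in the annulus `ε ≤ |x−a_k| < ε+δ` (bound for `I₂`):
`Σ_{i≠j} (x−aᵢ)·(x−aⱼ)/(|x−aᵢ|²|x−aⱼ|²) ≤ (n/ε) Σ_{j≠k} 1/(|a_k−aⱼ|−(ε+δ))`,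
where `2d` is the minimal distance between distinct poles. -/
theorem stmt11
    {N n : ℕ} (hN : 3 ≤ N) (hn : 2 ≤ n)
    (a : Fin n → EuclideanSpace ℝ (Fin N)) (ha : Function.Injective a)
    (d : ℝ) (hd : IsLeast {r : ℝ | ∃ i j : Fin n, i ≠ j ∧ r = ‖a i - a j‖} (2 * d))
    (k : Fin n) (ε δ : ℝ) (hε : 0 < ε) (hδ : 0 < δ) (hεδ : ε + δ < d)
    (x : EuclideanSpace ℝ (Fin N)) (hx : ε ≤ ‖x - a k‖) (hx' : ‖x - a k‖ < ε + δ) :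
    (∑ i, ∑ j, if i = j then 0 else
        ⟪x - a i, x - a j⟫ / (‖x - a i‖ ^ 2 * ‖x - a j‖ ^ 2))
      ≤ (n : ℝ) / ε * ∑ j, if j ≠ k then 1 / (‖a k - a j‖ - (ε + δ)) else 0 := by
  have hlb : ∀ i j : Fin n, i ≠ j → 2 * d ≤ ‖a i - a j‖ := fun i j hij =>
    hd.2 ⟨i, j, hij, rfl⟩
  -- ε is a lower bound on all distances ‖x - a i‖
  have hA : ∀ i, ε ≤ ‖x - a i‖ := by
    intro i
    by_cases hik : i = k
    · subst hik; exact hx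
    · have h1 : 2 * d ≤ ‖a k - a i‖ := hlb k i (Ne.symm hik)
      have h2 : ‖a k - a i‖ ≤ ‖a k - x‖ + ‖x - a i‖ := by
        have := norm_add_le (a k - x) (x - a i)
        simpa using this
      have h3 : ‖a k - x‖ = ‖x - a k‖ := norm_sub_rev _ _
      linarith
  have hC : ∀ j : Fin n, j ≠ k → ‖a k - a j‖ - (ε + δ) ≤ ‖x - a j‖ := by
    intro j hjk
    have h2 : ‖a k - a j‖ ≤ ‖a k - x‖ + ‖x - a j‖ := by
      have := norm_add_le (a k - x) (x - a j)
      simpa using this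
    have h3 : ‖a k - x‖ = ‖x - a k‖ := norm_sub_rev _ _
    linarith
  have hCpos : ∀ j : Fin n, j ≠ k → 0 < ‖a k - a j‖ - (ε + δ) := by
    intro j hjk
    have h1 : 2 * d ≤ ‖a k - a j‖ := hlb k j (Ne.symm hjk)
    linarith
  -- key pointwise estimate
  have hkey : ∀ i j : Fin n, i ≠ j → j ≠ k →
      ⟪x - a i, x - a j⟫ / (‖x - a i‖ ^ 2 * ‖x - a j‖ ^ 2)
        ≤ 1 / ε * (1 / (‖a k - a j‖ - (ε + δ))) := by
    intro i j hij hjk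
    set A := ‖x - a i‖ with hAdef
    set B := ‖x - a j‖ with hBdef
    have hA0 : 0 < A := lt_of_lt_of_le hε (hA i)
    have hB0 : 0 < B := lt_of_lt_of_le hε (hA j)
    have hCj := hCpos j hjk
    have hinner : ⟪x - a i, x - a j⟫ ≤ A * B := real_inner_le_norm _ _
    have step1 : ⟪x - a i, x - a j⟫ / (A ^ 2 * B ^ 2) ≤ (A * B) / (A ^ 2 * B ^ 2) := by
      apply div_le_div_of_nonneg_right hinner ?_ |>.trans_eq rfl
      positivity
    have step1' : (A * B) / (A ^ 2 * B ^ 2) = 1 / (A * B) := by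
      field_simp
    have step2 : 1 / (A * B) ≤ 1 / (ε * (‖a k - a j‖ - (ε + δ))) := by
      apply one_div_le_one_div_of_le
      · positivity
      · exact mul_le_mul (hA i) (hC j hjk) (le_of_lt hCj) (le_of_lt hA0)
    calc ⟪x - a i, x - a j⟫ / (A ^ 2 * B ^ 2) ≤ (A * B) / (A ^ 2 * B ^ 2) := step1
      _ = 1 / (A * B) := step1'
      _ ≤ 1 / (ε * (‖a k - a j‖ - (ε + δ))) := step2
      _ = 1 / ε * (1 / (‖a k - a j‖ - (ε + δ))) := by rw [one_div_mul_one_div]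
  -- symmetric version
  have hkey' : ∀ i j : Fin n, i ≠ j → i ≠ k →
      ⟪x - a i, x - a j⟫ / (‖x - a i‖ ^ 2 * ‖x - a j‖ ^ 2)
        ≤ 1 / ε * (1 / (‖a k - a i‖ - (ε + δ))) := by
    intro i j hij hik
    have := hkey j i (Ne.symm hij) hik
    rwa [real_inner_comm, mul_comm (‖x - a j‖ ^ 2)] at this
  have main : (∑ i : Fin n, ∑ j : Fin n, if i = j then 0 else
        ⟪x - a i, x - a j⟫ / (‖x - a i‖ ^ 2 * ‖x - a j‖ ^ 2))
      ≤ ∑ _i : Fin n, ∑ j : Fin n,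
        (if j ≠ k then 1 / ε * (1 / (‖a k - a j‖ - (ε + δ))) else 0) := by
    apply Finset.sum_le_sum
    intro i _
    by_cases hik : i = k
    · apply Finset.sum_le_sum
      intro j _
      by_cases hjk : j = k
      · simp [hik, hjk]
      · rw [if_neg (fun h => hjk ((h : i = j).symm.trans hik)), if_pos hjk]
        exact hkey i j (fun h => hjk ((h : i = j).symm.trans hik)) hjk
    · have hre : (∑ j : Fin n, (if i = j then 0 else
          ⟪x - a i, x - a j⟫ / (‖x - a i‖ ^ 2 * ‖x - a j‖ ^ 2)))
        = ∑ j : Fin n, (if i = Equiv.swap i k j then 0 else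
          ⟪x - a i, x - a (Equiv.swap i k j)⟫
            / (‖x - a i‖ ^ 2 * ‖x - a (Equiv.swap i k j)‖ ^ 2)) :=
        (Fintype.sum_equiv (Equiv.swap i k) _ _ (fun j => rfl)).symm
      rw [hre]
      apply Finset.sum_le_sum
      intro j _
      by_cases hjk : j = k
      · rw [hjk, Equiv.swap_apply_right]
        simp
      · by_cases hji : j = i
        · rw [hji, Equiv.swap_apply_left, if_neg hik, if_pos hik]
          exact hkey' i k hik hik
        · rw [Equiv.swap_apply_of_ne_of_ne hji hjk,
            if_neg (fun h => hji h.symm), if_pos hjk]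
          exact hkey i j (fun h => hji h.symm) hjk
  refine main.trans ?_
  rw [Finset.sum_const, Finset.card_univ, Fintype.card_fin, nsmul_eq_mul,
    Finset.mul_sum, Finset.mul_sum]
  apply le_of_eq
  apply Finset.sum_congr rfl
  intro j _
  by_cases hjk : j = k
  · simp [hjk]
  · rw [if_pos hjk, if_pos hjk]
    field_simp
end

section
/- Let δ ≥ 0, β > 0, 0 < r_0 < d, and let μ(x) := exp(−δ Σ_{j=1}^n |x − a_j|²). Then there exists a constant C ∈ ℝ such that for every x ∈ ℝ^N \ {a_1,…,a_n}: −β Σ_{i=1}^n (x − a_i)·∇μ(x)/(|x − a_i|² μ(x)) ≤ C + K β Σ_{i=1}^n 1/|x − a_i|², where K := δ · max_{k ∈ {1,…,n}} Σ_{j ∈ {1,…,n}\{k}} (r_0² + 2 r_0 |a_k − a_j|). In particular, since K ≥ 0 > 2 − N, this weight satisfies hypothesis (H2). -/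
open RealInnerProductSpace
open InnerProductSpace

lemma grad_inner_eq {N n : ℕ} (δ : ℝ) (a : Fin n → EuclideanSpace ℝ (Fin N))
    (x v : EuclideanSpace ℝ (Fin N)) :
    ⟪v, gradient (fun y => Real.exp (-δ * ∑ j, ‖y - a j‖ ^ 2)) x⟫ =
      Real.exp (-δ * ∑ j, ‖x - a j‖ ^ 2) * (-δ * ∑ j, (2 * ⟪x - a j, v⟫)) := by
  let E := EuclideanSpace ℝ (Fin N)
  have h1 : ∀ j : Fin n, HasFDerivAt (fun y : E => ⟪y - a j, y - a j⟫)
      ((fderivInnerCLM ℝ (x - a j, x - a j)).comp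
        ((ContinuousLinearMap.id ℝ E).prod (ContinuousLinearMap.id ℝ E))) x := fun j =>
    HasFDerivAt.inner ℝ ((hasFDerivAt_id x).sub_const (a j)) ((hasFDerivAt_id x).sub_const (a j))
  have h2 := HasFDerivAt.fun_sum (fun j (_ : j ∈ Finset.univ) => h1 j)
  have h3 := (h2.const_mul (-δ)).exp
  have hfun : (fun y : E => Real.exp (-δ * ∑ j, ‖y - a j‖ ^ 2)) =
      fun y : E => Real.exp (-δ * ∑ j, ⟪y - a j, y - a j⟫) := by
    funext y; simp only [real_inner_self_eq_norm_sq]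
  rw [hfun]
  rw [h3.hasGradientAt.gradient, real_inner_comm, toDual_symm_apply]
  simp only [ContinuousLinearMap.smul_apply, ContinuousLinearMap.sum_apply,
    ContinuousLinearMap.comp_apply, ContinuousLinearMap.prod_apply,
    ContinuousLinearMap.coe_id', id_eq, fderivInnerCLM_apply, smul_eq_mul,
    real_inner_self_eq_norm_sq]
  congr 2
  · exact Finset.sum_congr rfl fun j _ => by rw [ContinuousLinearMap.id_apply, real_inner_comm]; ring

lemma amgm {t K : ℝ} (c : ℝ) (ht : 0 < t) (hK : 0 < K) :
    c / t ≤ K / t ^ 2 + c ^ 2 / (4 * K) := by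
  have h : K / t ^ 2 + c ^ 2 / (4 * K) - c / t = (2 * K / t - c) ^ 2 / (4 * K) := by
    field_simp; ring
  nlinarith [div_nonneg (sq_nonneg (2 * K / t - c)) (by linarith : (0:ℝ) ≤ 4 * K)]

/-- The weight `μ(x) = exp(−δ Σⱼ |x−aⱼ|²)` satisfies hypothesis (H2): there is a constant
`C` such that for every `x` outside the poles,
`−β Σᵢ (x−aᵢ)·∇μ(x)/(|x−aᵢ|² μ(x)) ≤ C + K β Σᵢ 1/|x−aᵢ|²`, where
`K = δ max_k Σ_{j≠k} (r₀² + 2r₀|a_k−a_j|) ≥ 0 > 2 − N`, and `2d` is the minimal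
distance between distinct poles. -/
theorem stmt15
    {N n : ℕ} (hN : 3 ≤ N) (hn : 2 ≤ n)
    (a : Fin n → EuclideanSpace ℝ (Fin N)) (ha : Function.Injective a)
    (d : ℝ) (hd : IsLeast {r : ℝ | ∃ i j : Fin n, i ≠ j ∧ r = ‖a i - a j‖} (2 * d))
    (δ β r₀ : ℝ) (hδ : 0 ≤ δ) (hβ : 0 < β) (hr₀ : 0 < r₀) (hr₀d : r₀ < d) :
    ∃ C K : ℝ,
      K = δ * (Finset.univ.sup' ⟨(⟨0, by omega⟩ : Fin n), Finset.mem_univ _⟩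
          fun k => ∑ j, if j ≠ k then r₀ ^ 2 + 2 * r₀ * ‖a k - a j‖ else 0) ∧
      0 ≤ K ∧ 2 - (N : ℝ) < K ∧
      ∀ x : EuclideanSpace ℝ (Fin N), (∀ i, x ≠ a i) →
        -β * ∑ i, ⟪x - a i,
            gradient (fun y => Real.exp (-δ * ∑ j, ‖y - a j‖ ^ 2)) x⟫ /
              (‖x - a i‖ ^ 2 * Real.exp (-δ * ∑ j, ‖x - a j‖ ^ 2))
          ≤ C + K * β * ∑ i, 1 / ‖x - a i‖ ^ 2 := by
  have hN2 : (2 : ℝ) - (N : ℝ) < 0 := by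
    have : (3 : ℝ) ≤ (N : ℝ) := by exact_mod_cast hN
    linarith
  set M : ℝ := Finset.univ.sup' ⟨(⟨0, by omega⟩ : Fin n), Finset.mem_univ _⟩
      (fun k => ∑ j, if j ≠ k then r₀ ^ 2 + 2 * r₀ * ‖a k - a j‖ else 0) with hMdef
  -- M is positive
  have hb0 : (⟨0, by omega⟩ : Fin n) ∈ Finset.univ := Finset.mem_univ _
  have hMpos : 0 < M := by
    set b0 : Fin n := ⟨0, by omega⟩
    set b1 : Fin n := ⟨1, by omega⟩
    have hne : b1 ≠ b0 := by simp [b0, b1, Fin.ext_iff]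
    have h1 : r₀ ^ 2 + 2 * r₀ * ‖a b0 - a b1‖ ≤
        ∑ j, if j ≠ b0 then r₀ ^ 2 + 2 * r₀ * ‖a b0 - a j‖ else 0 := by
      have := Finset.single_le_sum
        (f := fun j => if j ≠ b0 then r₀ ^ 2 + 2 * r₀ * ‖a b0 - a j‖ else 0)
        (fun j _ => by by_cases h : j ≠ b0 <;> simp [h] <;> positivity)
        (Finset.mem_univ b1)
      simpa [hne] using this
    have h2 : (fun k => ∑ j, if j ≠ k then r₀ ^ 2 + 2 * r₀ * ‖a k - a j‖ else 0) b0 ≤ M :=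
      Finset.le_sup' (f := fun k => ∑ j, if j ≠ k then r₀ ^ 2 + 2 * r₀ * ‖a k - a j‖ else 0)
        (Finset.mem_univ b0)
    have h3 : 0 < r₀ ^ 2 + 2 * r₀ * ‖a b0 - a b1‖ := by positivity
    simp only at h2
    linarith
  rcases hδ.eq_or_lt with hδ0 | hδpos
  · -- δ = 0
    subst hδ0
    refine ⟨0, 0, by rw [zero_mul], le_refl 0, by linarith, ?_⟩
    intro x hx
    have h0 : ∑ i, ⟪x - a i,
        gradient (fun y => Real.exp (-(0:ℝ) * ∑ j, ‖y - a j‖ ^ 2)) x⟫ /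
          (‖x - a i‖ ^ 2 * Real.exp (-(0:ℝ) * ∑ j, ‖x - a j‖ ^ 2)) = 0 :=
      Finset.sum_eq_zero fun i _ => by rw [grad_inner_eq]; simp
    rw [h0]
    simp
  · -- δ > 0
    have hK : 0 < δ * M := mul_pos hδpos hMpos
    refine ⟨∑ i : Fin n, (2 * β * δ * n +
        β * (2 * δ * (∑ j, ‖a i - a j‖)) ^ 2 / (4 * (δ * M))), δ * M, rfl, hK.le,
        by linarith, ?_⟩
    intro x hx
    have ht : ∀ i, 0 < ‖x - a i‖ := fun i =>
      norm_pos_iff.mpr (sub_ne_zero.mpr (hx i))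
    have hEx : (0:ℝ) < Real.exp (-δ * ∑ j, ‖x - a j‖ ^ 2) := Real.exp_pos _
    have hrw : ∀ i : Fin n,
        ⟪x - a i, gradient (fun y => Real.exp (-δ * ∑ j, ‖y - a j‖ ^ 2)) x⟫ /
            (‖x - a i‖ ^ 2 * Real.exp (-δ * ∑ j, ‖x - a j‖ ^ 2)) =
          (-δ * ∑ j, (2 * ⟪x - a j, x - a i⟫)) / ‖x - a i‖ ^ 2 := by
      intro i
      rw [grad_inner_eq, mul_comm (‖x - a i‖ ^ 2), mul_div_mul_left _ _ hEx.ne']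
    calc -β * ∑ i, ⟪x - a i,
            gradient (fun y => Real.exp (-δ * ∑ j, ‖y - a j‖ ^ 2)) x⟫ /
              (‖x - a i‖ ^ 2 * Real.exp (-δ * ∑ j, ‖x - a j‖ ^ 2))
        = ∑ i, β * δ * ((∑ j, (2 * ⟪x - a j, x - a i⟫)) / ‖x - a i‖ ^ 2) := by
          rw [Finset.mul_sum]
          exact Finset.sum_congr rfl fun i _ => by rw [hrw i]; ring
      _ ≤ ∑ i, ((2 * β * δ * n +
            β * (2 * δ * (∑ j, ‖a i - a j‖)) ^ 2 / (4 * (δ * M))) +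
            δ * M * β * (1 / ‖x - a i‖ ^ 2)) := by
          refine Finset.sum_le_sum fun i _ => ?_
          set t := ‖x - a i‖ with htdef
          set c := ∑ j, ‖a i - a j‖ with hcdef
          have htpos : 0 < t := ht i
          have hc0 : 0 ≤ c := Finset.sum_nonneg fun j _ => norm_nonneg _
          have hSin : ∑ j, ⟪x - a j, x - a i⟫ ≤ n * t ^ 2 + c * t := by
            have hperj : ∀ j : Fin n, ⟪x - a j, x - a i⟫ ≤ t ^ 2 + ‖a i - a j‖ * t := by
              intro j
              have hxj : x - a j = (x - a i) + (a i - a j) := by abel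
              rw [hxj, inner_add_left, real_inner_self_eq_norm_sq]
              have h2 := real_inner_le_norm (a i - a j) (x - a i)
              rw [← htdef] at h2 ⊢
              linarith
            calc ∑ j, ⟪x - a j, x - a i⟫ ≤ ∑ j : Fin n, (t ^ 2 + ‖a i - a j‖ * t) :=
                  Finset.sum_le_sum fun j _ => hperj j
              _ = n * t ^ 2 + c * t := by
                  rw [Finset.sum_add_distrib, Finset.sum_const, Finset.card_univ,
                    Fintype.card_fin, nsmul_eq_mul, ← Finset.sum_mul]
          have hsum2 : ∑ j, (2 * ⟪x - a j, x - a i⟫) = 2 * ∑ j, ⟪x - a j, x - a i⟫ := by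
            rw [Finset.mul_sum]
          have h1 : (∑ j, (2 * ⟪x - a j, x - a i⟫)) / t ^ 2 ≤ 2 * n + 2 * c / t := by
            rw [hsum2]
            have hle : 2 * ∑ j, ⟪x - a j, x - a i⟫ ≤ 2 * (n * t ^ 2 + c * t) := by linarith
            calc (2 * ∑ j, ⟪x - a j, x - a i⟫) / t ^ 2
                ≤ (2 * (n * t ^ 2 + c * t)) / t ^ 2 := by
                  exact div_le_div_of_nonneg_right hle (by positivity)
              _ = 2 * n + 2 * c / t := by field_simp
          have h2 : (2 * δ * c) / t ≤ (δ * M) / t ^ 2 + (2 * δ * c) ^ 2 / (4 * (δ * M)) :=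
            amgm _ htpos hK
          calc β * δ * ((∑ j, (2 * ⟪x - a j, x - a i⟫)) / t ^ 2)
              ≤ β * δ * (2 * n + 2 * c / t) := by
                exact mul_le_mul_of_nonneg_left h1 (by positivity)
            _ = 2 * β * δ * n + β * ((2 * δ * c) / t) := by ring
            _ ≤ 2 * β * δ * n + β * ((δ * M) / t ^ 2 + (2 * δ * c) ^ 2 / (4 * (δ * M))) := by
                exact add_le_add_right (mul_le_mul_of_nonneg_left h2 hβ.le) _
            _ = (2 * β * δ * n + β * (2 * δ * c) ^ 2 / (4 * (δ * M))) +
                δ * M * β * (1 / t ^ 2) := by ring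
      _ = (∑ i : Fin n, (2 * β * δ * n +
            β * (2 * δ * (∑ j, ‖a i - a j‖)) ^ 2 / (4 * (δ * M)))) +
            δ * M * β * ∑ i, 1 / ‖x - a i‖ ^ 2 := by
          rw [Finset.sum_add_distrib, ← Finset.mul_sum]
end

section
/- Let k, i, j ∈ {1,…,n} with i ≠ k and j ≠ i, and let 0 < r_0 < d. Then for every x with |x − a_k| < r_0: 2·(x − a_i)·(x − a_j)/|x − a_i|² ≤ 1 + max(0, (r_0 + |a_k − a_j|)² − |a_i − a_j|²)/(|a_k − a_i| − r_0)². -/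
open RealInnerProductSpace

/-- Estimate of the term `J₄` in the verification of (H2) for the Gaussian-type weight:
for `i ≠ k`, `j ≠ i`, `0 < r₀ < d` and `|x−a_k| < r₀`,
`2 (x−aᵢ)·(x−aⱼ)/|x−aᵢ|² ≤ 1 + max(0, (r₀+|a_k−a_j|)² − |aᵢ−aⱼ|²)/(|a_k−aᵢ|−r₀)²`,
where `2d` is the minimal distance between distinct poles. -/
theorem stmt17
    {N n : ℕ} (hN : 3 ≤ N) (hn : 2 ≤ n)
    (a : Fin n → EuclideanSpace ℝ (Fin N)) (ha : Function.Injective a)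
    (d : ℝ) (hd : IsLeast {r : ℝ | ∃ i j : Fin n, i ≠ j ∧ r = ‖a i - a j‖} (2 * d))
    (k i j : Fin n) (hik : i ≠ k) (hji : j ≠ i)
    (r₀ : ℝ) (hr₀ : 0 < r₀) (hr₀d : r₀ < d)
    (x : EuclideanSpace ℝ (Fin N)) (hx : ‖x - a k‖ < r₀) :
    2 * ⟪x - a i, x - a j⟫ / ‖x - a i‖ ^ 2
      ≤ 1 + max 0 ((r₀ + ‖a k - a j‖) ^ 2 - ‖a i - a j‖ ^ 2) / (‖a k - a i‖ - r₀) ^ 2 := by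
  have h2d : 2 * d ≤ ‖a k - a i‖ := hd.2 ⟨k, i, hik.symm, rfl⟩
  have hdpos : 0 < d := hr₀.trans hr₀d
  have hc : 0 < ‖a k - a i‖ - r₀ := by linarith
  -- lower bound on ‖x - a i‖
  have htri : ‖a k - a i‖ ≤ ‖a k - x‖ + ‖x - a i‖ := by
    calc ‖a k - a i‖ = ‖(a k - x) + (x - a i)‖ := by abel_nf
    _ ≤ ‖a k - x‖ + ‖x - a i‖ := norm_add_le _ _
  have hkx : ‖a k - x‖ = ‖x - a k‖ := norm_sub_rev _ _
  have hu : ‖a k - a i‖ - r₀ ≤ ‖x - a i‖ := by rw [hkx] at htri; linarith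
  have hupos : 0 < ‖x - a i‖ := lt_of_lt_of_le hc hu
  have hu2 : 0 < ‖x - a i‖ ^ 2 := by positivity
  -- upper bound on ‖x - a j‖
  have htri2 : ‖x - a j‖ ≤ ‖x - a k‖ + ‖a k - a j‖ := by
    calc ‖x - a j‖ = ‖(x - a k) + (a k - a j)‖ := by abel_nf
    _ ≤ ‖x - a k‖ + ‖a k - a j‖ := norm_add_le _ _
  have hv : ‖x - a j‖ ≤ r₀ + ‖a k - a j‖ := by linarith
  -- inner product identity
  have key : 2 * ⟪x - a i, x - a j⟫
      = ‖x - a i‖ ^ 2 + (‖x - a j‖ ^ 2 - ‖a i - a j‖ ^ 2) := by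
    have h := @norm_sub_sq_real (EuclideanSpace ℝ (Fin N)) _ _ (x - a i) (x - a j)
    have h2 : (x - a i) - (x - a j) = a j - a i := by abel
    rw [h2, show ‖a j - a i‖ = ‖a i - a j‖ from norm_sub_rev _ _] at h
    linarith
  rw [key, add_div, div_self (ne_of_gt hu2)]
  gcongr 1 + ?_
  rcases le_or_gt (‖x - a j‖ ^ 2 - ‖a i - a j‖ ^ 2) 0 with h0 | h0
  · have : (‖x - a j‖ ^ 2 - ‖a i - a j‖ ^ 2) / ‖x - a i‖ ^ 2 ≤ 0 :=
      div_nonpos_iff.2 (Or.inr ⟨h0, le_of_lt hu2⟩)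
    have : 0 ≤ max 0 ((r₀ + ‖a k - a j‖) ^ 2 - ‖a i - a j‖ ^ 2) / (‖a k - a i‖ - r₀) ^ 2 := by
      positivity
    linarith
  · apply div_le_div₀ (le_max_iff.2 (Or.inl le_rfl))
    · exact le_max_of_le_right (by nlinarith [norm_nonneg (x - a j)])
    · positivity
    · exact pow_le_pow_left₀ (le_of_lt hc) hu 2
end
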